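/- For every function f definable in BC⁻ (safe recursion on notation with both composition and recursion linear in safe arguments), there is a polynomial q such that len(f(n⃗; s⃗)) ≤ q(len n₁, …, len n_k) + max_j len s_j, where len is binary length. -/

import Mathlib

/-! Induction on `BC`. The base functions change binary length by at most one. For safe
composition, the bounds of the normal-argument functions are substituted into the polynomial of
the outer function (`bind₁`), and the bounds of the safe-argument functions, each of which sees
only its own chunk of the safe arguments, are added. For safe recursion on notation, the
recursive value is a safe argument of the step function and so contributes only through the
maximum: each of the `len n` recursion steps adds the step polynomial to the bound instead of
multiplying it, giving `len n * (q_H0 + q_H1) + q_G`. -/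

/-- Split a list into consecutive chunks of the given sizes. -/
def chunks : List ℕ → List ℕ → List (List ℕ)
  | [], _ => []
  | m :: ms, s => s.take m :: chunks ms (s.drop m)

/-- The class BC⁻ of safe-recursive functions, semantically: `BC k l f` means
`f`, taking a list of `k` normal and a list of `l` safe arguments, is built
from zero, the binary successors, the predecessor, projections and branching,
closed under (linear) safe composition and safe recursion on notation. -/
inductive BC : ℕ → ℕ → (List ℕ → List ℕ → ℕ) → Prop
  | zero (k l : ℕ) : BC k l (fun _ _ => 0)
  | suc0 : BC 0 1 (fun _ s => 2 * s.headD 0)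
  | suc1 : BC 0 1 (fun _ s => 2 * s.headD 0 + 1)
  | pred : BC 0 1 (fun _ s => s.headD 0 / 2)
  | proj (k l i : ℕ) (hi : i < k + l) : BC k l (fun x s => (x ++ s).getD i 0)
  | bran : BC 0 3 (fun _ s => if s.headD 0 = 0 then s.getD 1 0 else s.getD 2 0)
  | comp (k k' : ℕ) (F : List ℕ → List ℕ → ℕ)
      (gs : List (List ℕ → List ℕ → ℕ))
      (hs : List (ℕ × (List ℕ → List ℕ → ℕ)))
      (hF : BC k' hs.length F)
      (hgs : ∀ g ∈ gs, BC k 0 g) (hglen : gs.length = k')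
      (hhs : ∀ p ∈ hs, BC k p.1 p.2) :
      BC k (hs.map Prod.fst).sum
        (fun x s =>
          F (gs.map (fun g => g x []))
            (List.zipWith (fun p c => p.2 x c) hs (chunks (hs.map Prod.fst) s)))
  | srec (k l : ℕ) (G H0 H1 F : List ℕ → List ℕ → ℕ)
      (hG : BC k l G) (hH0 : BC (k + 1) (l + 1) H0) (hH1 : BC (k + 1) (l + 1) H1)
      (hF0 : ∀ x s, F (0 :: x) s = G x s)
      (hFs : ∀ n x s, 1 ≤ n →
        F (n :: x) s =
          (if n % 2 = 1 then H1 else H0) (n / 2 :: x) (s ++ [F (n / 2 :: x) s])) :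
      BC (k + 1) l F

open MvPolynomial

theorem MvPolynomial.eval_mono {σ R : Type*} [CommSemiring R] [PartialOrder R]
    [CanonicallyOrderedAdd R] [IsOrderedRing R] {v w : σ → R} (h : v ≤ w)
    (p : MvPolynomial σ R) : eval v p ≤ eval w p := by
  induction p using MvPolynomial.induction_on with
  | C a => simp
  | add p q hp hq => simpa only [map_add] using add_le_add hp hq
  | mul_X p i hp => simpa only [map_mul, eval_X] using mul_le_mul' hp (h i)

theorem MvPolynomial.eval_bind₁ {σ τ R : Type*} [CommSemiring R] (v : τ → R)
    (g : σ → MvPolynomial τ R) (p : MvPolynomial σ R) :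
    eval v (bind₁ g p) = eval (fun i => eval v (g i)) p := by
  simp only [← coe_aeval_eq_eval]
  exact aeval_bind₁ v g p

namespace Nat

theorem size_le_size_div_two_add_one (n : ℕ) : size n ≤ size (n / 2) + 1 := by
  rw [size_le, pow_succ]
  have := lt_size_self (n / 2)
  omega

theorem size_div_two_add_one_le {n : ℕ} (hn : n ≠ 0) : size (n / 2) + 1 ≤ size n := by
  obtain ⟨m, hm⟩ := exists_eq_succ_of_ne_zero (size_pos.2 (pos_of_ne_zero hn)).ne'
  have hn_lt := lt_size_self n
  rw [hm, pow_succ] at hn_lt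
  have : size (n / 2) ≤ m := size_le.2 (by omega)
  omega

end Nat

theorem length_chunks (ms s : List ℕ) : (chunks ms s).length = ms.length := by
  induction ms generalizing s with
  | nil => rfl
  | cons m ms ih => simp [chunks, ih]

def maxSize (s : List ℕ) : ℕ := (s.map Nat.size).foldr max 0

theorem maxSize_le_iff {s : List ℕ} {B : ℕ} :
    maxSize s ≤ B ↔ ∀ a ∈ s, Nat.size a ≤ B := by
  induction s with
  | nil => simp [maxSize]
  | cons a s ih => simp [maxSize, ← ih]

theorem size_le_maxSize {s : List ℕ} {a : ℕ} (h : a ∈ s) : Nat.size a ≤ maxSize s :=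
  maxSize_le_iff.1 le_rfl a h

theorem List.Sublist.maxSize_le {s t : List ℕ} (h : s.Sublist t) : maxSize s ≤ maxSize t :=
  maxSize_le_iff.2 fun _ ha => size_le_maxSize (h.subset ha)

theorem size_getD_le_maxSize (s : List ℕ) (i : ℕ) : Nat.size (s.getD i 0) ≤ maxSize s := by
  by_cases hi : i < s.length
  · exact size_le_maxSize (List.getD_eq_getElem s 0 hi ▸ List.getElem_mem hi)
  · rw [List.getD_eq_default s 0 (not_lt.1 hi), Nat.size_zero]
    exact Nat.zero_le _

theorem size_headD_le_maxSize (s : List ℕ) : Nat.size (s.headD 0) ≤ maxSize s := by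
  cases s with
  | nil => simp
  | cons a s => exact size_le_maxSize List.mem_cons_self

def sizes {k : ℕ} (x : List ℕ) (i : Fin k) : ℕ := Nat.size (x.getD i 0)

theorem sizes_cons_zero {k : ℕ} (n : ℕ) (x : List ℕ) :
    sizes (k := k + 1) (n :: x) 0 = Nat.size n :=
  rfl

theorem sizes_cons_comp_succ {k : ℕ} (n : ℕ) (x : List ℕ) :
    sizes (k := k + 1) (n :: x) ∘ Fin.succ = sizes x :=
  rfl

theorem sizes_cons_mono {k m n : ℕ} (h : m ≤ n) (x : List ℕ) :
    sizes (k := k + 1) (m :: x) ≤ sizes (n :: x) :=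
  fun i => Fin.cases (Nat.size_le_size h) (fun _ => le_rfl) i

def PolyMaxBounded (k l : ℕ) (f : List ℕ → List ℕ → ℕ) : Prop :=
  ∃ q : MvPolynomial (Fin k) ℕ, ∀ x s : List ℕ, x.length = k → s.length = l →
    Nat.size (f x s) ≤ eval (sizes x) q + maxSize s

namespace PolyMaxBounded

theorem of_le_const_add {k l : ℕ} {f : List ℕ → List ℕ → ℕ} (c : ℕ)
    (h : ∀ x s : List ℕ, x.length = k → s.length = l → Nat.size (f x s) ≤ c + maxSize s) :
    PolyMaxBounded k l f :=
  ⟨C c, by simpa only [eval_C] using h⟩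

theorem zero (k l : ℕ) : PolyMaxBounded k l fun _ _ => 0 :=
  of_le_const_add 0 fun _ _ _ _ => by simp

theorem suc0 : PolyMaxBounded 0 1 fun _ s => 2 * s.headD 0 :=
  of_le_const_add 1 fun _ s _ _ => by
    have := Nat.size_le_size_div_two_add_one (2 * s.headD 0)
    rw [Nat.mul_div_cancel_left _ two_pos] at this
    have := size_headD_le_maxSize s
    omega

theorem suc1 : PolyMaxBounded 0 1 fun _ s => 2 * s.headD 0 + 1 :=
  of_le_const_add 1 fun _ s _ _ => by
    have := Nat.size_le_size_div_two_add_one (2 * s.headD 0 + 1)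
    rw [show (2 * s.headD 0 + 1) / 2 = s.headD 0 by omega] at this
    have := size_headD_le_maxSize s
    omega

theorem pred : PolyMaxBounded 0 1 fun _ s => s.headD 0 / 2 :=
  of_le_const_add 0 fun _ s _ _ =>
    (Nat.size_le_size (Nat.div_le_self _ _)).trans (by simpa using size_headD_le_maxSize s)

theorem proj (k l i : ℕ) : PolyMaxBounded k l fun x s => (x ++ s).getD i 0 := by
  by_cases hik : i < k
  · refine ⟨X ⟨i, hik⟩, fun x s hx _ => ?_⟩
    beta_reduce
    rw [List.getD_append x s 0 i (hx ▸ hik), eval_X]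
    exact Nat.le_add_right _ _
  · refine of_le_const_add 0 fun x s hx _ => ?_
    rw [List.getD_append_right x s 0 i (by omega), zero_add]
    exact size_getD_le_maxSize s _

theorem bran :
    PolyMaxBounded 0 3 fun _ s => if s.headD 0 = 0 then s.getD 1 0 else s.getD 2 0 :=
  of_le_const_add 0 fun _ s _ _ => by
    split_ifs <;> simpa using size_getD_le_maxSize s _

theorem exists_sizes_map_le {k k' : ℕ} {gs : List (List ℕ → List ℕ → ℕ)}
    (hgs : ∀ g ∈ gs, PolyMaxBounded k 0 g) (hglen : gs.length = k') :
    ∃ Q : Fin k' → MvPolynomial (Fin k) ℕ, ∀ x : List ℕ, x.length = k →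
      sizes (gs.map fun g => g x []) ≤ fun i => eval (sizes x) (Q i) := by
  have (i : Fin k') : ∃ q : MvPolynomial (Fin k) ℕ, ∀ x : List ℕ, x.length = k →
      sizes (gs.map fun g => g x []) i ≤ eval (sizes x) q := by
    have hi : (i : ℕ) < gs.length := hglen ▸ i.isLt
    obtain ⟨q, hq⟩ := hgs _ (List.getElem_mem hi)
    refine ⟨q, fun x hx => ?_⟩
    simpa [sizes, maxSize, List.getD_eq_getElem, hi] using hq x [] hx rfl
  choose Q hQ using this
  exact ⟨Q, fun x hx i => hQ i x hx⟩

theorem exists_maxSize_zipWith_chunks_le {k : ℕ}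
    {hs : List (ℕ × (List ℕ → List ℕ → ℕ))} (hhs : ∀ p ∈ hs, PolyMaxBounded k p.1 p.2) :
    ∃ q : MvPolynomial (Fin k) ℕ, ∀ x s : List ℕ, x.length = k →
      s.length = (hs.map Prod.fst).sum →
      maxSize (List.zipWith (fun p c => p.2 x c) hs (chunks (hs.map Prod.fst) s)) ≤
        eval (sizes x) q + maxSize s := by
  induction hs with
  | nil => exact ⟨0, fun _ _ _ _ => by simp [chunks, maxSize]⟩
  | cons p hs ih =>
    obtain ⟨qp, hqp⟩ := hhs p List.mem_cons_self
    obtain ⟨qs, hqs⟩ := ih fun p hp => hhs p (List.mem_cons_of_mem _ hp)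
    refine ⟨qp + qs, fun x s hx hsl => ?_⟩
    simp only [List.map_cons, List.sum_cons] at hsl
    simp only [List.map_cons, chunks, List.zipWith_cons_cons, maxSize_le_iff,
      List.mem_cons, forall_eq_or_imp, map_add]
    constructor
    · calc Nat.size (p.2 x (s.take p.1))
          ≤ eval (sizes x) qp + maxSize (s.take p.1) := hqp x _ hx (by simp; omega)
        _ ≤ eval (sizes x) qp + eval (sizes x) qs + maxSize s := by
          have := (List.take_sublist p.1 s).maxSize_le
          omega
    · intro a ha
      calc Nat.size a
          ≤ eval (sizes x) qs + maxSize (s.drop p.1) :=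
            maxSize_le_iff.1 (hqs x _ hx (by simp; omega)) a ha
        _ ≤ eval (sizes x) qp + eval (sizes x) qs + maxSize s := by
          have := (List.drop_sublist p.1 s).maxSize_le
          omega

theorem comp {k k' : ℕ} {F : List ℕ → List ℕ → ℕ} {gs : List (List ℕ → List ℕ → ℕ)}
    {hs : List (ℕ × (List ℕ → List ℕ → ℕ))} (hF : PolyMaxBounded k' hs.length F)
    (hgs : ∀ g ∈ gs, PolyMaxBounded k 0 g) (hglen : gs.length = k')
    (hhs : ∀ p ∈ hs, PolyMaxBounded k p.1 p.2) :
    PolyMaxBounded k (hs.map Prod.fst).sum fun x s =>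
      F (gs.map fun g => g x [])
        (List.zipWith (fun p c => p.2 x c) hs (chunks (hs.map Prod.fst) s)) := by
  obtain ⟨qF, hqF⟩ := hF
  obtain ⟨Q, hQ⟩ := exists_sizes_map_le hgs hglen
  obtain ⟨qH, hqH⟩ := exists_maxSize_zipWith_chunks_le hhs
  refine ⟨bind₁ Q qF + qH, fun x s hx hsl => ?_⟩
  calc _ ≤ eval (sizes (gs.map fun g => g x [])) qF +
        maxSize (List.zipWith (fun p c => p.2 x c) hs (chunks (hs.map Prod.fst) s)) :=
        hqF _ _ (by simp [hglen]) (by simp [length_chunks])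
    _ ≤ eval (fun i => eval (sizes x) (Q i)) qF + (eval (sizes x) qH + maxSize s) :=
        add_le_add (eval_mono (hQ x hx) qF) (hqH x s hx hsl)
    _ = eval (sizes x) (bind₁ Q qF + qH) + maxSize s := by
        rw [map_add, eval_bind₁, add_assoc]

theorem size_le_of_srec {k l : ℕ} {G H0 H1 F : List ℕ → List ℕ → ℕ}
    {qG : MvPolynomial (Fin k) ℕ} {qH : MvPolynomial (Fin (k + 1)) ℕ}
    (hG : ∀ x s : List ℕ, x.length = k → s.length = l →
      Nat.size (G x s) ≤ eval (sizes x) qG + maxSize s)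
    (hH : ∀ n x s, x.length = k → s.length = l + 1 →
      Nat.size ((if n % 2 = 1 then H1 else H0) (n / 2 :: x) s) ≤
        eval (sizes (n / 2 :: x)) qH + maxSize s)
    (hF0 : ∀ x s, F (0 :: x) s = G x s)
    (hFs : ∀ n x s, 1 ≤ n →
      F (n :: x) s = (if n % 2 = 1 then H1 else H0) (n / 2 :: x) (s ++ [F (n / 2 :: x) s]))
    (n : ℕ) (x s : List ℕ) (hx : x.length = k) (hs : s.length = l) :
    Nat.size (F (n :: x) s) ≤
      Nat.size n * eval (sizes (n :: x)) qH + eval (sizes x) qG + maxSize s := by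
  induction n using Nat.strong_induction_on with
  | _ n ih =>
    rcases eq_or_ne n 0 with rfl | hn
    · simpa [hF0] using hG x s hx hs
    rw [hFs n x s (Nat.one_le_iff_ne_zero.2 hn)]
    set B := eval (sizes (n / 2 :: x)) qH
    have hB : B ≤ eval (sizes (n :: x)) qH :=
      eval_mono (sizes_cons_mono (Nat.div_le_self n 2) x) _
    have hrec := ih (n / 2) (Nat.div_lt_self (Nat.pos_of_ne_zero hn) one_lt_two)
    have hsafe : maxSize (s ++ [F (n / 2 :: x) s]) ≤
        Nat.size (n / 2) * B + eval (sizes x) qG + maxSize s := by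
      refine maxSize_le_iff.2 fun a ha => ?_
      rcases List.mem_append.1 ha with ha | ha
      · have := size_le_maxSize ha; omega
      · rwa [List.mem_singleton.1 ha]
    calc _ ≤ B + maxSize (s ++ [F (n / 2 :: x) s]) := hH n x _ hx (by simp [hs])
      _ ≤ (Nat.size (n / 2) + 1) * B + eval (sizes x) qG + maxSize s := by
          rw [add_mul, one_mul]; omega
      _ ≤ _ := by gcongr; exact Nat.size_div_two_add_one_le hn

theorem srec {k l : ℕ} {G H0 H1 F : List ℕ → List ℕ → ℕ} (hG : PolyMaxBounded k l G)
    (hH0 : PolyMaxBounded (k + 1) (l + 1) H0) (hH1 : PolyMaxBounded (k + 1) (l + 1) H1)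
    (hF0 : ∀ x s, F (0 :: x) s = G x s)
    (hFs : ∀ n x s, 1 ≤ n →
      F (n :: x) s = (if n % 2 = 1 then H1 else H0) (n / 2 :: x) (s ++ [F (n / 2 :: x) s])) :
    PolyMaxBounded (k + 1) l F := by
  obtain ⟨qG, hqG⟩ := hG
  obtain ⟨qH0, hqH0⟩ := hH0
  obtain ⟨qH1, hqH1⟩ := hH1
  have hH (n : ℕ) (x s : List ℕ) (hx : x.length = k) (hs : s.length = l + 1) :
      Nat.size ((if n % 2 = 1 then H1 else H0) (n / 2 :: x) s) ≤
        eval (sizes (n / 2 :: x)) (qH0 + qH1) + maxSize s := by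
    rw [map_add]
    split_ifs
    · have := hqH1 (n / 2 :: x) s (by simp [hx]) hs; omega
    · have := hqH0 (n / 2 :: x) s (by simp [hx]) hs; omega
  refine ⟨X 0 * (qH0 + qH1) + rename Fin.succ qG, fun x s hx hs => ?_⟩
  obtain ⟨n, x, rfl⟩ := List.exists_cons_of_length_eq_add_one hx
  simpa only [map_add, map_mul, eval_X, eval_rename, sizes_cons_zero, sizes_cons_comp_succ]
    using size_le_of_srec hqG hH hF0 hFs n x s (by simpa using hx) hs

end PolyMaxBounded

theorem BC.polyMaxBounded {k l : ℕ} {f : List ℕ → List ℕ → ℕ} (hf : BC k l f) :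
    PolyMaxBounded k l f := by
  induction hf with
  | zero k l => exact .zero k l
  | suc0 => exact .suc0
  | suc1 => exact .suc1
  | pred => exact .pred
  | proj k l i _ => exact .proj k l i
  | bran => exact .bran
  | comp _ _ _ _ _ _ _ hglen _ ihF ihgs ihhs => exact .comp ihF ihgs hglen ihhs
  | srec _ _ _ _ _ _ _ _ _ hF0 hFs ihG ihH0 ihH1 => exact .srec ihG ihH0 ihH1 hF0 hFs

/-- Bellantoni–Cook poly-max bounding lemma: every BC⁻ function is bounded,
in binary length, by a polynomial in the lengths of its normal arguments plus
the maximum length of its safe arguments. -/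
theorem stmt_10 (k l : ℕ) (f : List ℕ → List ℕ → ℕ) (hf : BC k l f) :
    ∃ q : MvPolynomial (Fin k) ℕ,
      ∀ x s : List ℕ, x.length = k → s.length = l →
        Nat.size (f x s) ≤
          MvPolynomial.eval (fun i : Fin k => Nat.size (x.getD (i : ℕ) 0)) q +
            (s.map Nat.size).foldr max 0 :=
  hf.polyMaxBounded
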